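/- arXiv:math/0501222 — 2 statements merged into one kernel-verified Lean document; each statement's English description precedes it below -/
import Mathlib

section
/- Let (X, B, μ) be a Lebesgue probability space with a metric d whose open balls are measurable, assume the support of μ is not reduced to a single point, and let T : X → X be a measure-preserving transformation such that T × T is ergodic with respect to μ ⊗ μ (i.e. T is weakly mixing). Then every δ with 0 < δ < diam(supp μ) is a sensitivity constant for T: for μ⊗μ-a.e. (x,y) ∈ X² there exists n ≥ 0 with d(Tⁿx, Tⁿy) ≥ δ. -/
/-! Pick `u, v` in the support of `μ` with `δ < d(u, v)`. By continuity of the distance, every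
pair in a small product of balls `B(u, ε) × B(v, ε)` is more than `δ` apart, and this product has
positive `μ ⊗ μ`-measure because `u` and `v` lie in the support. By ergodicity of `T × T`, almost
every orbit of `T × T` enters the product, i.e. almost every pair is eventually `δ`-separated. -/

open MeasureTheory Metric Filter
open scoped ENNReal

/-- The support of a measure on a metric space: the set of points all of whose
open balls have positive measure (the smallest closed set of full measure). -/
def msupport {X : Type*} [MeasurableSpace X] [MetricSpace X] (μ : Measure X) : Set X :=
  {x : X | ∀ ε : ℝ, 0 < ε → 0 < μ (Metric.ball x ε)}

/-- `δ` is a sensitivity constant for `T`: `δ > 0` and for `μ⊗μ`-a.e. `(x,y)` there is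
`n ≥ 0` with `d(Tⁿx,Tⁿy) ≥ δ`. -/
def IsSensitivityConstant {X : Type*} [MeasurableSpace X] [MetricSpace X]
    (T : X → X) (μ : Measure X) (δ : ℝ≥0∞) : Prop :=
  0 < δ ∧ ∀ᵐ p ∂ μ.prod μ, ∃ n : ℕ, δ ≤ edist (T^[n] p.1) (T^[n] p.2)

/-- `Δ(T)`: the supremum of the sensitivity constants of `T`. -/
noncomputable def sensDelta {X : Type*} [MeasurableSpace X] [MetricSpace X]
    (T : X → X) (μ : Measure X) : ℝ≥0∞ :=
  sSup {δ : ℝ≥0∞ | IsSensitivityConstant T μ δ}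

theorem Metric.exists_mem_lt_edist_of_lt_ediam {X : Type*} [PseudoEMetricSpace X] {s : Set X}
    {δ : ℝ≥0∞} (h : δ < ediam s) : ∃ u ∈ s, ∃ v ∈ s, δ < edist u v := by
  simpa only [ediam, lt_iSup_iff, exists_prop] using h

theorem Metric.exists_pos_lt_edist_on_ball_prod {X : Type*} [PseudoMetricSpace X] {u v : X}
    {δ : ℝ≥0∞} (h : δ < edist u v) :
    ∃ ε > 0, ∀ p ∈ ball u ε ×ˢ ball v ε, δ < edist p.1 p.2 := by
  have hopen : IsOpen {p : X × X | δ < edist p.1 p.2} :=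
    isOpen_lt continuous_const (continuous_fst.edist continuous_snd)
  obtain ⟨ε, hε, hball⟩ := Metric.isOpen_iff.mp hopen (u, v) h
  exact ⟨ε, hε, by rwa [ball_prod_same]⟩

theorem measure_ball_prod_ball_pos {X : Type*} [MeasurableSpace X] [MetricSpace X]
    {μ : Measure X} [SFinite μ] {u v : X} (hu : u ∈ msupport μ) (hv : v ∈ msupport μ)
    {ε : ℝ} (hε : 0 < ε) : 0 < μ.prod μ (ball u ε ×ˢ ball v ε) := by
  rw [Measure.prod_prod]
  exact ENNReal.mul_pos (hu ε hε).ne' (hv ε hε).ne'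

theorem Ergodic.ae_exists_iterate_mem {α : Type*} [MeasurableSpace α] {μ : Measure α}
    [IsFiniteMeasure μ] {f : α → α} (hf : Ergodic f μ) {s : Set α} (hs : MeasurableSet s)
    (hμs : μ s ≠ 0) :
    ∀ᵐ x ∂μ, ∃ n, f^[n] x ∈ s := by
  set t := ⋃ n, f^[n] ⁻¹' s
  have ht : MeasurableSet t := .iUnion fun n => hs.preimage (hf.measurable.iterate n)
  have hft : f ⁻¹' t ⊆ t := by
    simp only [t, Set.preimage_iUnion, ← Set.preimage_comp, ← Function.iterate_succ]
    exact Set.iUnion_subset fun n => Set.subset_iUnion (fun n => f^[n] ⁻¹' s) (n + 1)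
  have hst : s ⊆ t := Set.subset_iUnion (fun n => f^[n] ⁻¹' s) 0
  rcases hf.ae_empty_or_univ_of_preimage_ae_le ht.nullMeasurableSet hft.eventuallyLE
    with hempty | huniv
  · exact absurd (measure_mono_null hst (ae_eq_empty.mp hempty)) hμs
  · filter_upwards [huniv.mem_iff] with x hx
    exact Set.mem_iUnion.mp (hx.mpr trivial)

theorem stmt_6_general {X : Type*} [MeasurableSpace X] [MetricSpace X]
    (μ : Measure X) [IsProbabilityMeasure μ]
    (hballs : ∀ (z : X) (r : ℝ), MeasurableSet (Metric.ball z r))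
    (T : X → X)
    (hwm : Ergodic (Prod.map T T) (μ.prod μ)) :
    ∀ δ : ℝ≥0∞, 0 < δ → δ < EMetric.diam (msupport μ) →
      ∀ᵐ p ∂ μ.prod μ, ∃ n : ℕ, δ ≤ edist (T^[n] p.1) (T^[n] p.2) := by
  intro δ _ hδ
  obtain ⟨u, hu, v, hv, huv⟩ := exists_mem_lt_edist_of_lt_ediam hδ
  obtain ⟨ε, hε, hfar⟩ := exists_pos_lt_edist_on_ball_prod huv
  filter_upwards [hwm.ae_exists_iterate_mem ((hballs u ε).prod (hballs v ε))
    (measure_ball_prod_ball_pos hu hv hε).ne'] with p ⟨n, hn⟩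
  rw [Prod.map_iterate] at hn
  exact ⟨n, (hfar _ hn).le⟩

/-- if `T` is weakly mixing (i.e. `T × T` is ergodic for `μ ⊗ μ`), then every
`δ` with `0 < δ < diam (supp μ)` is a sensitivity constant for `T`. -/
theorem stmt_6 {X : Type*} [MeasurableSpace X] [StandardBorelSpace X] [MetricSpace X]
    (μ : Measure X) [IsProbabilityMeasure μ]
    (hballs : ∀ (z : X) (r : ℝ), MeasurableSet (Metric.ball z r))
    (hsupp : ∃ x ∈ msupport μ, ∃ y ∈ msupport μ, x ≠ y)
    (T : X → X) (hT : MeasurePreserving T μ μ)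
    (hwm : Ergodic (Prod.map T T) (μ.prod μ)) :
    ∀ δ : ℝ≥0∞, 0 < δ → δ < EMetric.diam (msupport μ) →
      ∀ᵐ p ∂ μ.prod μ, ∃ n : ℕ, δ ≤ edist (T^[n] p.1) (T^[n] p.2) :=
  stmt_6_general μ hballs T hwm
end

section
/- Let (X, B, μ) be a Lebesgue probability space with a metric d whose open balls are measurable, and let T : X → X be a measure-preserving transformation which is symmetrically sensitive with sensitivity constant δ > 0. Then for μ-a.e. x ∈ X and every ε > 0, the set of points y with d(x, y) < ε and d(Tⁿx, Tⁿy) ≥ δ for some n ≥ 0 has positive μ-measure whenever x lies in the support of μ; in particular, T satisfies Guckenheimer's sensitivity property on a full-measure subset of the support of μ. -/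
open MeasureTheory Metric Filter
open scoped ENNReal

/-- if `T` is symmetrically sensitive with sensitivity constant `δ > 0`,
then for `μ`-a.e. `x` lying in the support of `μ` and every `ε > 0`, the set of `y` with
`d(x,y) < ε` and `d(Tⁿx,Tⁿy) ≥ δ` for some `n` has positive measure; in particular some
such `y` exists (Guckenheimer's sensitivity property) on a full-measure subset of the
support of `μ`. -/
theorem stmt_15 {X : Type*} [MeasurableSpace X] [StandardBorelSpace X] [MetricSpace X]
    (μ : Measure X) [IsProbabilityMeasure μ]
    (hballs : ∀ (z : X) (r : ℝ), MeasurableSet (Metric.ball z r))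
    (T : X → X) (hT : MeasurePreserving T μ μ) (δ : ℝ) (hδ : 0 < δ)
    (hsens : ∀ᵐ p ∂ μ.prod μ, ∃ n : ℕ, δ ≤ dist (T^[n] p.1) (T^[n] p.2)) :
    ∀ᵐ x ∂μ, x ∈ msupport μ → ∀ ε : ℝ, 0 < ε →
      0 < μ {y : X | dist x y < ε ∧ ∃ n : ℕ, δ ≤ dist (T^[n] x) (T^[n] y)} ∧
        ∃ y : X, dist x y < ε ∧ ∃ n : ℕ, δ ≤ dist (T^[n] x) (T^[n] y) := by
  have h := MeasureTheory.Measure.ae_ae_of_ae_prod hsens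
  filter_upwards [h] with x hx hxsupp ε hε
  set S : Set X := {y : X | ∃ n : ℕ, δ ≤ dist (T^[n] x) (T^[n] y)} with hS
  have hSc : μ Sᶜ = 0 := by
    rw [Set.compl_setOf]
    exact hx
  have hsub : Metric.ball x ε ⊆ {y : X | dist x y < ε ∧ ∃ n : ℕ,
      δ ≤ dist (T^[n] x) (T^[n] y)} ∪ Sᶜ := by
    intro y hy
    by_cases hyS : y ∈ S
    · exact Or.inl ⟨by rwa [dist_comm, ← Metric.mem_ball], hyS⟩
    · exact Or.inr hyS
  have hpos : 0 < μ {y : X | dist x y < ε ∧ ∃ n : ℕ, δ ≤ dist (T^[n] x) (T^[n] y)} := by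
    by_contra hle
    push_neg at hle
    have h0 : μ {y : X | dist x y < ε ∧ ∃ n : ℕ, δ ≤ dist (T^[n] x) (T^[n] y)} = 0 :=
      le_antisymm hle bot_le
    have : μ (Metric.ball x ε) = 0 := by
      refine le_antisymm ?_ bot_le
      calc μ (Metric.ball x ε) ≤ μ ({y : X | dist x y < ε ∧ ∃ n : ℕ,
            δ ≤ dist (T^[n] x) (T^[n] y)} ∪ Sᶜ) := measure_mono hsub
        _ ≤ _ + _ := measure_union_le _ _
        _ = 0 := by rw [h0, hSc, add_zero]
    exact absurd this (hxsupp ε hε).ne'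
  refine ⟨hpos, ?_⟩
  obtain ⟨y, hy⟩ := MeasureTheory.nonempty_of_measure_ne_zero hpos.ne'
  exact ⟨y, hy⟩
end
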